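/- arXiv:0712.2058 — 2 statements merged into one kernel-verified Lean document; each statement's English description precedes it below -/
import Mathlib

section
/- (Dodgson condensation) Let n ≥ 2 and let A be an n×n matrix over ℂ. Denote by A(i|j) the (n−1)×(n−1) minor matrix obtained by deleting row i and column j, and by A(1,n|1,n) the (n−2)×(n−2) matrix obtained by deleting both the first and last rows and the first and last columns. Then det(A) · det(A(1,n|1,n)) = det(A(1|1)) · det(A(n|n)) − det(A(1|n)) · det(A(n|1)). -/
open Matrix

namespace Dodgson13

variable {m : ℕ} {R : Type*} [CommRing R]

private def gmap (m : ℕ) : Fin 2 ⊕ Fin m → Fin (m + 2) :=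
  Sum.elim ![(0 : Fin (m + 2)), Fin.last (m + 1)] fun k : Fin m => k.castSucc.succ

private lemma gmap_val (m : ℕ) (x : Fin 2 ⊕ Fin m) : (gmap m x).val =
    Sum.elim (fun i : Fin 2 => if i.val = 0 then 0 else m + 1)
      (fun k : Fin m => k.val + 1) x := by
  rcases x with i | k
  · fin_cases i <;> simp [gmap]
  · simp [gmap]

private lemma gmap_inj (m : ℕ) : Function.Injective (gmap m) := by
  intro a b hab
  have h := congrArg Fin.val hab
  rw [gmap_val, gmap_val] at h
  rcases a with i | k <;> rcases b with j | l <;>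
    simp only [Sum.elim_inl, Sum.elim_inr] at h
  · have hi := i.isLt; have hj := j.isLt
    congr 1; apply Fin.ext; split_ifs at h <;> omega
  · have := l.isLt; split_ifs at h <;> omega
  · have := k.isLt; split_ifs at h <;> omega
  · have : k.val = l.val := by omega
    congr 1; exact Fin.ext this

private noncomputable def emap (m : ℕ) : (Fin 2 ⊕ Fin m) ≃ Fin (m + 2) :=
  Equiv.ofBijective (gmap m)
    ((Fintype.bijective_iff_injective_and_card _).2 ⟨gmap_inj m, by simp; omega⟩)

private lemma last_ne_zero (m : ℕ) : (Fin.last (m + 1)) ≠ (0 : Fin (m + 2)) := by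
  simp [Fin.ext_iff]

private lemma interior_ne_zero (j : Fin m) : j.castSucc.succ ≠ (0 : Fin (m + 2)) :=
  Fin.succ_ne_zero _

private lemma interior_ne_last (j : Fin m) : j.castSucc.succ ≠ Fin.last (m + 1) := by
  rw [← Fin.succ_last]
  exact fun h => absurd (Fin.succ_injective _ h) (Fin.ne_of_lt (Fin.castSucc_lt_last j))

/-- matrix with columns `0` and `last` replaced by the corresponding adjugate columns
and other columns those of the identity -/
private def Cm (A : Matrix (Fin (m + 2)) (Fin (m + 2)) R) : Matrix (Fin (m + 2)) (Fin (m + 2)) R :=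
  updateCol (updateCol 1 0 fun i => adjugate A i 0) (Fin.last (m + 1))
    fun i => adjugate A i (Fin.last (m + 1))

private lemma det_Cm (A : Matrix (Fin (m + 2)) (Fin (m + 2)) R) : det (Cm A) =
    adjugate A 0 0 * adjugate A (Fin.last (m + 1)) (Fin.last (m + 1)) -
      adjugate A 0 (Fin.last (m + 1)) * adjugate A (Fin.last (m + 1)) 0 := by
  have h : (Cm A).submatrix (emap m) (emap m) =
      fromBlocks
        !![adjugate A 0 0, adjugate A 0 (Fin.last (m + 1));
           adjugate A (Fin.last (m + 1)) 0, adjugate A (Fin.last (m + 1)) (Fin.last (m + 1))]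
        0
        (of fun k i => Cm A (gmap m (Sum.inr k)) (gmap m (Sum.inl i)))
        1 := by
    ext x y
    have he : ∀ z, (emap m) z = gmap m z := fun z => rfl
    rcases x with i | k <;> rcases y with j | l <;>
      simp only [submatrix_apply, he, fromBlocks_apply₁₁, fromBlocks_apply₁₂,
        fromBlocks_apply₂₁, fromBlocks_apply₂₂, of_apply]
    · fin_cases i <;> fin_cases j <;>
        simp [Cm, gmap, updateCol_apply, last_ne_zero m, (last_ne_zero m).symm]
    · -- row in {0, last}, interior column : entry 0
      have h1 := interior_ne_zero l
      have h2 := interior_ne_last l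
      have h3 : l.castSucc ≠ Fin.last m := Fin.ne_of_lt (Fin.castSucc_lt_last l)
      fin_cases i <;>
        simp [Cm, gmap, updateCol_apply, h1, h2, h3, one_apply,
          h1.symm, h2.symm]
    · have h1 := interior_ne_zero k
      have h2 := interior_ne_last k
      have hinj : k.castSucc.succ = l.castSucc.succ ↔ k = l := by
        constructor
        · intro h
          exact Fin.castSucc_injective _ (Fin.succ_injective _ h)
        · rintro rfl; rfl
      have h3 : l.castSucc ≠ Fin.last m := Fin.ne_of_lt (Fin.castSucc_lt_last l)
      simp [Cm, gmap, updateCol_apply, interior_ne_zero l,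
        interior_ne_last l, h3, one_apply, hinj]
  have hdet := det_submatrix_equiv_self (emap m) (Cm A)
  rw [h] at hdet
  rw [← hdet, det_fromBlocks_zero₁₂, det_one, mul_one, det_fin_two]
  simp


private def Em (A : Matrix (Fin (m + 2)) (Fin (m + 2)) R) : Matrix (Fin (m + 2)) (Fin (m + 2)) R :=
  updateCol (updateCol A 0 ((Pi.single 0 1 : Fin (m + 2) → R))) (Fin.last (m + 1))
    ((Pi.single (Fin.last (m + 1)) 1 : Fin (m + 2) → R))

private def Dm (A : Matrix (Fin (m + 2)) (Fin (m + 2)) R) : Matrix (Fin (m + 2)) (Fin (m + 2)) R :=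
  updateCol (updateCol A 0 (A.det • (Pi.single 0 1 : Fin (m + 2) → R))) (Fin.last (m + 1))
    (A.det • (Pi.single (Fin.last (m + 1)) 1 : Fin (m + 2) → R))

private lemma updateCol_comm' {n : Type*} [DecidableEq n] [Fintype n]
    (M : Matrix n n R) {i j : n} (h : i ≠ j) (u v : n → R) :
    updateCol (updateCol M i u) j v = updateCol (updateCol M j v) i u := by
  ext a b
  simp only [updateCol_apply]
  split_ifs with h1 h2 <;> simp_all

private lemma mul_Cm (A : Matrix (Fin (m + 2)) (Fin (m + 2)) R) : A * Cm A = Dm A := by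
  have hadj := mul_adjugate A
  ext i j
  rw [mul_apply]
  rcases eq_or_ne j (Fin.last (m + 1)) with rfl | hjl
  · have : ∑ k, A i k * Cm A k (Fin.last (m + 1)) = (A * adjugate A) i (Fin.last (m + 1)) := by
      rw [mul_apply]
      refine Finset.sum_congr rfl fun k _ => ?_
      simp [Cm]
    rw [this, hadj]
    simp [Dm, one_apply, Pi.single_apply]
  rcases eq_or_ne j 0 with rfl | hj0
  · have : ∑ k, A i k * Cm A k 0 = (A * adjugate A) i 0 := by
      rw [mul_apply]
      refine Finset.sum_congr rfl fun k _ => ?_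
      simp [Cm, updateCol_apply, last_ne_zero m]
    rw [this, hadj]
    simp [Dm, one_apply, Pi.single_apply, updateCol_apply, (last_ne_zero m).symm]
  · have : ∑ k, A i k * Cm A k j =
        (A * (1 : Matrix (Fin (m + 2)) (Fin (m + 2)) R)) i j := by
      rw [mul_apply]
      refine Finset.sum_congr rfl fun k _ => ?_
      simp [Cm, updateCol_apply, hjl, hj0]
    rw [this, mul_one]
    simp [Dm, updateCol_apply, hjl, hj0]

private lemma det_Dm (A : Matrix (Fin (m + 2)) (Fin (m + 2)) R) :
    det (Dm A) = A.det * (A.det * det (Em A)) := by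
  rw [Dm, det_updateCol_smul,
    updateCol_comm' _ (last_ne_zero m).symm, det_updateCol_smul,
    updateCol_comm' _ (last_ne_zero m), ← Em]

private lemma Em_interior (A : Matrix (Fin (m + 2)) (Fin (m + 2)) R) (i : Fin (m + 2))
    {j : Fin (m + 2)} (hj0 : j ≠ 0) (hjl : j ≠ Fin.last (m + 1)) : Em A i j = A i j := by
  simp [Em, updateCol_apply, hj0, hjl]

private lemma det_Em (A : Matrix (Fin (m + 2)) (Fin (m + 2)) R) :
    det (Em A) = det (A.submatrix (fun i : Fin m => i.castSucc.succ)
      (fun j : Fin m => j.castSucc.succ)) := by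
  rw [det_succ_column_zero, Fintype.sum_eq_single (0 : Fin (m + 2)) ?_]
  · have h00 : Em A 0 0 = 1 := by
      simp [Em, updateCol_apply, (last_ne_zero m)]
    rw [h00, Fin.val_zero, pow_zero, one_mul, one_mul, Fin.succAbove_zero]
    rw [det_succ_column _ (Fin.last m), Fintype.sum_eq_single (Fin.last m) ?_]
    · have hll : (Em A).submatrix Fin.succ Fin.succ (Fin.last m) (Fin.last m) = 1 := by
        simp [Em, Fin.succ_last]
      rw [hll, mul_one]
      have hsign : ((-1 : R)) ^ ((Fin.last m : ℕ) + (Fin.last m : ℕ)) = 1 :=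
        Even.neg_one_pow ⟨m, by simp [Fin.val_last]⟩
      rw [hsign, one_mul, Fin.succAbove_last]
      rw [submatrix_submatrix]
      congr 1
      ext i j
      simp only [submatrix_apply, Function.comp_apply]
      exact Em_interior A _ (interior_ne_zero j) (interior_ne_last j)
    · intro i hi
      have : (Em A).submatrix Fin.succ Fin.succ i (Fin.last m) = 0 := by
        have hne : i.succ ≠ Fin.last (m + 1) := by
          rw [← Fin.succ_last]
          exact fun h => hi (Fin.succ_injective _ h)
        simp [Em, Fin.succ_last, Pi.single_apply, hne]
      rw [this, mul_zero, zero_mul]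
  · intro i hi
    have : Em A i 0 = 0 := by
      simp [Em, updateCol_apply, last_ne_zero m, Pi.single_apply, hi]
    rw [this, mul_zero, zero_mul]

private lemma pre (A : Matrix (Fin (m + 2)) (Fin (m + 2)) R) :
    A.det * (A.det * det (A.submatrix (fun i : Fin m => i.castSucc.succ)
        (fun j : Fin m => j.castSucc.succ))) =
      A.det * (adjugate A 0 0 * adjugate A (Fin.last (m + 1)) (Fin.last (m + 1)) -
        adjugate A 0 (Fin.last (m + 1)) * adjugate A (Fin.last (m + 1)) 0) := by
  rw [← det_Cm, ← det_mul, mul_Cm, det_Dm, det_Em]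


private lemma adj_form (B : Matrix (Fin (m + 2)) (Fin (m + 2)) R) :
    adjugate B 0 0 * adjugate B (Fin.last (m + 1)) (Fin.last (m + 1)) -
        adjugate B 0 (Fin.last (m + 1)) * adjugate B (Fin.last (m + 1)) 0 =
      (B.submatrix (Fin.succAbove 0) (Fin.succAbove 0)).det *
          (B.submatrix (Fin.succAbove (Fin.last (m + 1)))
            (Fin.succAbove (Fin.last (m + 1)))).det -
        (B.submatrix (Fin.succAbove 0) (Fin.succAbove (Fin.last (m + 1)))).det *
          (B.submatrix (Fin.succAbove (Fin.last (m + 1))) (Fin.succAbove 0)).det := by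
  rw [adjugate_fin_succ_eq_det_submatrix, adjugate_fin_succ_eq_det_submatrix,
    adjugate_fin_succ_eq_det_submatrix, adjugate_fin_succ_eq_det_submatrix]
  simp only [Fin.val_zero, Fin.val_last, Nat.add_zero, Nat.zero_add, pow_zero, one_mul]
  rw [show ((-1 : R)) ^ (m + 1 + (m + 1)) = 1 from Even.neg_one_pow ⟨m + 1, rfl⟩, one_mul]
  rw [mul_mul_mul_comm, ← pow_add,
    show ((-1 : R)) ^ (m + 1 + (m + 1)) = 1 from Even.neg_one_pow ⟨m + 1, rfl⟩, one_mul]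
  ring

private lemma key (m : ℕ) (A : Matrix (Fin (m + 2)) (Fin (m + 2)) ℂ) :
    A.det * (A.submatrix (fun i : Fin m => i.castSucc.succ)
        (fun j : Fin m => j.castSucc.succ)).det =
      (A.submatrix (Fin.succAbove 0) (Fin.succAbove 0)).det *
          (A.submatrix (Fin.succAbove (Fin.last (m + 1)))
            (Fin.succAbove (Fin.last (m + 1)))).det -
        (A.submatrix (Fin.succAbove 0) (Fin.succAbove (Fin.last (m + 1)))).det *
          (A.submatrix (Fin.succAbove (Fin.last (m + 1))) (Fin.succAbove 0)).det := by
  have hcan := mul_left_cancel₀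
    (det_mvPolynomialX_ne_zero (Fin (m + 2)) ℤ)
    (pre (mvPolynomialX (Fin (m + 2)) (Fin (m + 2)) ℤ))
  rw [adj_form] at hcan
  have hf := congrArg
    (MvPolynomial.eval₂Hom (Int.castRingHom ℂ)
      fun p : Fin (m + 2) × Fin (m + 2) => A p.1 p.2) hcan
  have hX : (mvPolynomialX (Fin (m + 2)) (Fin (m + 2)) ℤ).map
      (MvPolynomial.eval₂Hom (Int.castRingHom ℂ)
        fun p : Fin (m + 2) × Fin (m + 2) => A p.1 p.2) = A :=
    mvPolynomialX_map_eval₂ _ A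
  simp only [map_sub, _root_.map_mul, RingHom.map_det, RingHom.mapMatrix_apply,
    ← Matrix.submatrix_map, hX] at hf
  exact hf

end Dodgson13



/-- Dodgson condensation: for an `n×n` matrix `A` with `n = m + 2 ≥ 2`,
`det(A) · det(A(1,n|1,n)) = det(A(1|1)) · det(A(n|n)) − det(A(1|n)) · det(A(n|1))`,
where `A(i|j)` deletes row `i` and column `j` (here `1` denotes the first index and
`n` the last), and `A(1,n|1,n)` deletes both the first and last rows and columns. -/
theorem stmt_13 (m : ℕ) (A : Matrix (Fin (m + 2)) (Fin (m + 2)) ℂ) :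
    A.det *
        (A.submatrix (fun i : Fin m => i.castSucc.succ)
            (fun j : Fin m => j.castSucc.succ)).det =
      (A.submatrix (Fin.succAbove 0) (Fin.succAbove 0)).det *
          (A.submatrix (Fin.succAbove (Fin.last (m + 1)))
            (Fin.succAbove (Fin.last (m + 1)))).det -
        (A.submatrix (Fin.succAbove 0) (Fin.succAbove (Fin.last (m + 1)))).det *
          (A.submatrix (Fin.succAbove (Fin.last (m + 1))) (Fin.succAbove 0)).det :=
  Dodgson13.key m A
end

section
/- (Jacobi determinant theorem, principal-minor case) Let A be an n×n matrix over ℂ and let S be a subset of the index set Fin n with |S| = k ≥ 1. Then the determinant of the principal k×k submatrix of adj(A) with rows and columns indexed by S equals det(A)^{k−1} times the determinant of the principal submatrix of A with rows and columns indexed by the complement of S: det(adj(A)[S,S]) = det(A)^{k−1} · det(A[Sᶜ,Sᶜ]). -/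
open Matrix Polynomial

private lemma jacobi_key {R : Type*} [CommRing R] {n : ℕ}
    (A : Matrix (Fin n) (Fin n) R) (S : Finset (Fin n)) :
    A.det * Matrix.det (A.adjugate.submatrix (fun x : {a // a ∈ S} => (x : Fin n))
        (fun x : {a // a ∈ S} => (x : Fin n))) =
      A.det ^ S.card * Matrix.det (A.submatrix (fun x : {a // a ∈ Sᶜ} => (x : Fin n))
        (fun x : {a // a ∈ Sᶜ} => (x : Fin n))) := by
  classical
  set p : Fin n → Prop := fun a => a ∈ S with hp
  let e : {x // p x} ⊕ {x // ¬ p x} ≃ Fin n := Equiv.sumCompl p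
  set Ar := A.submatrix e e with hAr
  set Br := A.adjugate.submatrix e e with hBr
  have hAB : Ar * Br = A.det • (1 : Matrix ({x // p x} ⊕ {x // ¬ p x}) _ R) := by
    rw [hAr, hBr, Matrix.submatrix_mul_equiv, Matrix.mul_adjugate]
    ext i j
    simp [Matrix.submatrix_apply, Matrix.one_apply, e.injective.eq_iff]
  have hAB' : Matrix.fromBlocks
      (Ar.toBlocks₁₁ * Br.toBlocks₁₁ + Ar.toBlocks₁₂ * Br.toBlocks₂₁)
      (Ar.toBlocks₁₁ * Br.toBlocks₁₂ + Ar.toBlocks₁₂ * Br.toBlocks₂₂)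
      (Ar.toBlocks₂₁ * Br.toBlocks₁₁ + Ar.toBlocks₂₂ * Br.toBlocks₂₁)
      (Ar.toBlocks₂₁ * Br.toBlocks₁₂ + Ar.toBlocks₂₂ * Br.toBlocks₂₂) =
      Matrix.fromBlocks (A.det • 1) 0 0 (A.det • 1) := by
    rw [← Matrix.fromBlocks_multiply, Matrix.fromBlocks_toBlocks, Matrix.fromBlocks_toBlocks,
      hAB, ← Matrix.fromBlocks_one, Matrix.fromBlocks_smul]
    simp
  have h11 : Ar.toBlocks₁₁ * Br.toBlocks₁₁ + Ar.toBlocks₁₂ * Br.toBlocks₂₁ = A.det • 1 := by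
    have := congrArg Matrix.toBlocks₁₁ hAB'
    simpa [Matrix.toBlocks_fromBlocks₁₁] using this
  have h21 : Ar.toBlocks₂₁ * Br.toBlocks₁₁ + Ar.toBlocks₂₂ * Br.toBlocks₂₁ = 0 := by
    have := congrArg Matrix.toBlocks₂₁ hAB'
    simpa [Matrix.toBlocks_fromBlocks₂₁] using this
  set M := Matrix.fromBlocks Br.toBlocks₁₁ 0 Br.toBlocks₂₁ (1 : Matrix {x // ¬ p x} {x // ¬ p x} R) with hM
  have hArM : Ar * M = Matrix.fromBlocks (A.det • 1) Ar.toBlocks₁₂ 0 Ar.toBlocks₂₂ := by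
    conv_lhs => rw [← Matrix.fromBlocks_toBlocks Ar]
    rw [hM, Matrix.fromBlocks_multiply, h11, h21]
    simp
  have hdet := congrArg Matrix.det hArM
  rw [Matrix.det_mul, hM, Matrix.det_fromBlocks_zero₁₂, Matrix.det_fromBlocks_zero₂₁,
    Matrix.det_one, mul_one, Matrix.det_smul, Matrix.det_one, mul_one] at hdet
  have hdetAr : Ar.det = A.det := by
    rw [hAr, Matrix.det_submatrix_equiv_self]
  have hB11 : Br.toBlocks₁₁ =
      A.adjugate.submatrix (fun x : {a // a ∈ S} => (x : Fin n))
        (fun x : {a // a ∈ S} => (x : Fin n)) := by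
    ext i j
    simp [Matrix.toBlocks₁₁, hBr, e, Matrix.submatrix_apply]
  have hA22 : Ar.toBlocks₂₂ =
      A.submatrix (fun x : {x // ¬ p x} => (x : Fin n)) (fun x : {x // ¬ p x} => (x : Fin n)) := by
    ext i j
    simp [Matrix.toBlocks₂₂, hAr, e, Matrix.submatrix_apply]
  have hcompl : Matrix.det (A.submatrix (fun x : {a // a ∈ Sᶜ} => (x : Fin n))
      (fun x : {a // a ∈ Sᶜ} => (x : Fin n))) = Matrix.det Ar.toBlocks₂₂ := by
    rw [hA22]
    rw [← Matrix.det_submatrix_equiv_self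
      (Equiv.subtypeEquivRight (p := fun a => a ∈ Sᶜ) (q := fun x => ¬ p x) (fun a => by simp [hp]))]
    congr 1
  have hcard : Fintype.card {x // p x} = S.card := Fintype.card_coe S
  rw [hdetAr, hB11, hcard] at hdet
  rw [hdet, hcompl]
/-- Jacobi determinant theorem (principal-minor case): for `S ⊆ Fin n` with
`|S| = k ≥ 1`, `det (adj(A)[S,S]) = det(A)^(k−1) · det (A[Sᶜ,Sᶜ])`. -/
theorem stmt_14 (n k : ℕ) (A : Matrix (Fin n) (Fin n) ℂ) (S : Finset (Fin n))
    (hS : S.card = k) (hk : 1 ≤ k) :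
    Matrix.det
        (A.adjugate.submatrix (fun x : {a // a ∈ S} => (x : Fin n))
          (fun x : {a // a ∈ S} => (x : Fin n))) =
      A.det ^ (k - 1) *
        Matrix.det
          (A.submatrix (fun x : {a // a ∈ Sᶜ} => (x : Fin n))
            (fun x : {a // a ∈ Sᶜ} => (x : Fin n))) := by
  classical
  subst hS
  set A' : Matrix (Fin n) (Fin n) (Polynomial ℂ) := Matrix.charmatrix (-A) with hA'
  have hd : A'.det ≠ 0 := (Matrix.charpoly_monic (-A)).ne_zero
  have hkey := jacobi_key A' S
  have hpow : A'.det ^ S.card = A'.det * A'.det ^ (S.card - 1) := by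
    conv_lhs => rw [← Nat.sub_add_cancel hk]
    exact pow_succ' _ _
  rw [hpow, mul_assoc] at hkey
  have hcancel := mul_left_cancel₀ hd hkey
  have := congrArg (Polynomial.evalRingHom (0 : ℂ)) hcancel
  set f := Polynomial.evalRingHom (0 : ℂ) with hf
  have hmap : A'.map f = A := by
    ext i j
    simp [hA', Matrix.charmatrix_apply, Matrix.map_apply, Matrix.one_apply, hf,
      Matrix.diagonal_apply]
    split <;> simp
  simp only [RingHom.map_det, _root_.map_mul, map_pow, RingHom.mapMatrix_apply,
    ← Matrix.submatrix_map] at this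
  have hadj : A'.adjugate.map f = A.adjugate := by
    have := RingHom.map_adjugate f A'
    simp only [RingHom.mapMatrix_apply] at this
    rw [this, hmap]
  rw [hadj, hmap] at this
  exact this
end
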